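/- Let B ⊆ ℝⁿ be a nonempty, compact, convex set with homogenization B̃. Let y ∈ {0, 1} and x, z ∈ ℝⁿ. If (z, y) ∈ B̃ and (x − z, 1 − y) ∈ B̃, then z = y • x. -/
import Mathlib


open Pointwise

/-- The homogenization of a set `B ⊆ ℝⁿ`:
`B̃ = {(x, y) : y ≥ 0 and x ∈ y • B}`. -/
def homogenization {n : ℕ} (B : Set (Fin n → ℝ)) : Set ((Fin n → ℝ) × ℝ) :=
  {p | 0 ≤ p.2 ∧ p.1 ∈ p.2 • B}

/-- Correctness of the McCormick-envelope formulation: for binary `y`, the two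
homogenized envelope constraints recover the bilinear equality `z = y • x`. -/
theorem mccormick_recovers_bilinear {n : ℕ} (B : Set (Fin n → ℝ))
    (hne : B.Nonempty) (hcomp : IsCompact B) (hconv : Convex ℝ B)
    (y : ℝ) (hy : y = 0 ∨ y = 1) (x z : Fin n → ℝ)
    (h1 : (z, y) ∈ homogenization B)
    (h2 : (x - z, 1 - y) ∈ homogenization B) :
    z = y • x := by
  rcases hy with hy | hy
  · subst hy
    obtain ⟨-, hz⟩ := h1
    rw [Set.zero_smul_set hne] at hz
    simp only [Set.mem_zero] at hz
    simp [hz]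
  · subst hy
    obtain ⟨-, hz⟩ := h2
    simp only [sub_self] at hz
    rw [Set.zero_smul_set hne] at hz
    simp only [Set.mem_zero, sub_eq_zero] at hz
    simp [hz]
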